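/- Fix the iteration map I(c) := (1 - λ/2)·Φ'(c)/(1-Φ(c)) for 0 < λ < 2. Then I is strictly increasing on ℝ, I(0) > 0, its unique fixed point on [0,∞) is κ (the solution of g(κ)=1-λ/2), and: if 0 < c < κ then c < I(c) < κ, while if c > κ then κ < I(c) < c. Consequently the iterates c_k = I^{(k)}(c₀) converge monotonically to κ from any c₀ ≥ 0. -/

import Mathlib

open Real MeasureTheory Filter

noncomputable def Phi (x : ℝ) : ℝ := ∫ t in Set.Iic x, (Real.sqrt (2 * Real.pi))⁻¹ * Real.exp (-t ^ 2 / 2)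

noncomputable def phi (x : ℝ) : ℝ := (Real.sqrt (2 * Real.pi))⁻¹ * Real.exp (-x ^ 2 / 2)

noncomputable def g (κ : ℝ) : ℝ := κ * (1 - Phi κ) / phi κ

/-- The iteration map I(c) = (1-λ/2)·Φ'(c)/(1-Φ(c)). -/
noncomputable def Imap (lam c : ℝ) : ℝ := (1 - lam / 2) * phi c / (1 - Phi c)

/-!
Writing `I(c) - c = (g κ - g c) · Φ'(c) / (1 - Φ(c))`, the sign of `I(c) - c` is that of `κ - c`
once `g` is strictly increasing. Both `g' > 0` and `I' > 0` reduce to the Mills-ratio bounds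
`c Φ'(c) < (1 + c²)(1 - Φ(c))` and `c (1 - Φ(c)) < Φ'(c)`: the upper one because
`Φ'(c) - c (1 - Φ(c)) = ∫_c^∞ (t - c) Φ'(t) dt`, the lower one because
`(1 + c²)(1 - Φ(c)) - c Φ'(c)` has derivative `2 (c (1 - Φ(c)) - Φ'(c)) < 0` and tends to `0`.
The iterates of a continuous monotone map are monotone, and, when bounded by its unique fixed point,
converge to a fixed point, hence to `κ`.
-/

open Set Function Topology ProbabilityTheory

section Iterate

variable {α : Type*} [ConditionallyCompleteLinearOrder α] [TopologicalSpace α] [OrderTopology α]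
  {f : α → α} {κ x : α}

theorem Monotone.tendsto_iterate_of_le_map_of_le_fixedPt (hf : Monotone f) (hcont : Continuous f)
    (hκ : IsFixedPt f κ) (huniq : ∀ y, IsFixedPt f y → y = κ) (hxκ : x ≤ κ) (hx : x ≤ f x) :
    Tendsto (fun n => f^[n] x) atTop (𝓝 κ) := by
  have hbdd : ∀ n, f^[n] x ≤ κ := fun n => (hκ.iterate n).eq ▸ hf.iterate n hxκ
  have hlim := tendsto_atTop_ciSup (hf.monotone_iterate_of_le_map hx)
    ⟨κ, by rintro _ ⟨n, rfl⟩; exact hbdd n⟩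
  rwa [huniq _ (isFixedPt_of_tendsto_iterate hlim hcont.continuousAt)] at hlim

theorem Monotone.tendsto_iterate_of_map_le_of_fixedPt_le (hf : Monotone f) (hcont : Continuous f)
    (hκ : IsFixedPt f κ) (huniq : ∀ y, IsFixedPt f y → y = κ) (hκx : κ ≤ x) (hx : f x ≤ x) :
    Tendsto (fun n => f^[n] x) atTop (𝓝 κ) :=
  hf.dual.tendsto_iterate_of_le_map_of_le_fixedPt (α := αᵒᵈ) hcont hκ huniq hκx hx

end Iterate

lemma phi_eq_gaussianPDFReal : phi = gaussianPDFReal 0 1 := by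
  ext x; simp [phi, gaussianPDFReal]

lemma phi_pos (x : ℝ) : 0 < phi x :=
  phi_eq_gaussianPDFReal ▸ gaussianPDFReal_pos 0 1 x one_ne_zero

lemma integrable_phi : Integrable phi :=
  phi_eq_gaussianPDFReal ▸ integrable_gaussianPDFReal 0 1

lemma integral_phi : ∫ x, phi x = 1 :=
  phi_eq_gaussianPDFReal ▸ integral_gaussianPDFReal_eq_one 0 one_ne_zero

lemma phi_eq_mul_exp (x : ℝ) : phi x = (√(2 * π))⁻¹ * exp (-2⁻¹ * x ^ 2) := by
  rw [phi]; ring_nf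

lemma continuous_phi : Continuous phi := by
  unfold phi; fun_prop

lemma hasDerivAt_phi (x : ℝ) : HasDerivAt phi (-x * phi x) x := by
  have hq : HasDerivAt (fun t : ℝ => -t ^ 2 / 2) (-x) x := by
    simpa [neg_div] using ((hasDerivAt_pow 2 x).neg.div_const 2)
  exact (hq.exp.const_mul (√(2 * π))⁻¹).congr_deriv (by simp only [phi]; ring)

lemma tendsto_rpow_mul_phi_atTop (s : ℝ) : Tendsto (fun x => x ^ s * phi x) atTop (𝓝 0) := by
  have hexp : Tendsto (fun x : ℝ => exp (-(1 / 2) * x)) atTop (𝓝 0) :=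
    tendsto_exp_atBot.comp (tendsto_id.const_mul_atTop_of_neg (by norm_num))
  have h := ((rpow_mul_exp_neg_mul_sq_isLittleO_exp_neg (b := 2⁻¹) (by norm_num) s).trans_tendsto
    hexp).const_mul (√(2 * π))⁻¹
  rw [mul_zero] at h
  refine h.congr fun x => ?_
  rw [phi_eq_mul_exp]; ring

lemma integrable_mul_phi : Integrable fun t => t * phi t := by
  refine ((integrable_mul_exp_neg_mul_sq (b := 2⁻¹) (by norm_num)).const_mul
    (√(2 * π))⁻¹).congr (Eventually.of_forall fun t => ?_)
  simp only [phi_eq_mul_exp]; ring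

lemma integral_Ioi_mul_phi (c : ℝ) : ∫ t in Ioi c, t * phi t = phi c := by
  have h := integral_Ioi_of_hasDerivAt_of_tendsto' (a := c) (f := fun t => -phi t)
    (fun x _ => (hasDerivAt_phi x).neg.congr_deriv (by ring)) integrable_mul_phi.integrableOn
    (by simpa using (tendsto_rpow_mul_phi_atTop 0).neg)
  simpa using h

lemma one_sub_Phi_eq_integral_Ioi (x : ℝ) : 1 - Phi x = ∫ t in Ioi x, phi t := by
  have h := intervalIntegral.integral_Iic_add_Ioi integrable_phi.integrableOn
    integrable_phi.integrableOn (b := x)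
  rw [integral_phi] at h
  simp only [Phi, ← h, phi]; ring

lemma one_sub_Phi_pos (x : ℝ) : 0 < 1 - Phi x := by
  rw [one_sub_Phi_eq_integral_Ioi, setIntegral_pos_iff_support_of_nonneg_ae
    (Eventually.of_forall fun t => (phi_pos t).le) integrable_phi.integrableOn]
  simp [Function.support, (phi_pos _).ne', Real.volume_Ioi]

lemma hasDerivAt_Phi (x : ℝ) : HasDerivAt Phi (phi x) x := by
  have hΦ : ∀ y, Phi y = Phi 0 + ∫ t in (0 : ℝ)..y, phi t := fun y => by
    rw [← intervalIntegral.integral_Iic_sub_Iic integrable_phi.integrableOn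
      integrable_phi.integrableOn]
    simp only [Phi, phi]; ring
  rw [funext hΦ]
  exact (continuous_phi.integral_hasStrictDerivAt 0 x).hasDerivAt.const_add _

lemma integral_Ioi_sub_mul_phi (c : ℝ) :
    ∫ t in Ioi c, (t - c) * phi t = phi c - c * (1 - Phi c) := by
  simp_rw [sub_mul]
  rw [integral_sub integrable_mul_phi.integrableOn (integrable_phi.integrableOn.const_mul c),
    integral_const_mul, integral_Ioi_mul_phi, one_sub_Phi_eq_integral_Ioi]

lemma mul_one_sub_Phi_lt_phi (c : ℝ) : c * (1 - Phi c) < phi c := by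
  rcases le_or_gt c 0 with hc | hc
  · nlinarith [phi_pos c, one_sub_Phi_pos c]
  have hsupp : support (fun t => (t - c) * phi t) ∩ Ioi c = Ioi c :=
    inter_eq_right.2 fun t ht => (mul_pos (sub_pos.2 ht) (phi_pos t)).ne'
  have hpos : 0 < ∫ t in Ioi c, (t - c) * phi t := by
    rw [setIntegral_pos_iff_support_of_nonneg_ae, hsupp]
    · simp
    · exact (ae_restrict_iff' measurableSet_Ioi).2
        (Eventually.of_forall fun t ht => (mul_pos (sub_pos.2 ht) (phi_pos t)).le)
    · exact (integrable_mul_phi.sub (integrable_phi.const_mul c)).integrableOn.congr_fun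
        (fun t _ => by simp only [Pi.sub_apply]; ring) measurableSet_Ioi
  linarith [integral_Ioi_sub_mul_phi c]

lemma tendsto_one_add_sq_mul_one_sub_Phi_atTop :
    Tendsto (fun c => (1 + c ^ 2) * (1 - Phi c)) atTop (𝓝 0) := by
  have h2 : Tendsto (fun c => 2 * (c * phi c)) atTop (𝓝 0) := by
    simpa using (tendsto_rpow_mul_phi_atTop 1).const_mul 2
  refine tendsto_of_tendsto_of_tendsto_of_le_of_le' tendsto_const_nhds h2
    (Eventually.of_forall fun c => by have := one_sub_Phi_pos c; positivity) ?_
  filter_upwards [eventually_ge_atTop 1] with c hc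
  nlinarith [mul_one_sub_Phi_lt_phi c, one_sub_Phi_pos c, phi_pos c]

lemma mul_phi_lt_one_add_sq_mul_one_sub_Phi (c : ℝ) : c * phi c < (1 + c ^ 2) * (1 - Phi c) := by
  set f := fun c => (1 + c ^ 2) * (1 - Phi c) - c * phi c
  have hderiv : ∀ c, HasDerivAt f (2 * (c * (1 - Phi c) - phi c)) c := fun c => by
    have h := (((hasDerivAt_pow 2 c).const_add 1).mul ((hasDerivAt_Phi c).const_sub 1)).sub
      ((hasDerivAt_id c).mul (hasDerivAt_phi c))
    exact h.congr_deriv (by simp only [id]; push_cast; ring)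
  have hanti : StrictAnti f := strictAnti_of_deriv_neg fun x => by
    rw [(hderiv x).deriv]; linarith [mul_one_sub_Phi_lt_phi x]
  have hlim : Tendsto f atTop (𝓝 0) := by
    simpa using tendsto_one_add_sq_mul_one_sub_Phi_atTop.sub (tendsto_rpow_mul_phi_atTop 1)
  have := hanti.antitone.le_of_tendsto hlim (c + 1)
  have := hanti (lt_add_one c)
  simp only [f] at *
  linarith

lemma hasDerivAt_g (c : ℝ) :
    HasDerivAt g (((1 + c ^ 2) * (1 - Phi c) - c * phi c) / phi c) c := by
  have h := ((hasDerivAt_id c).mul ((hasDerivAt_Phi c).const_sub 1)).div (hasDerivAt_phi c)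
    (phi_pos c).ne'
  refine h.congr_deriv ?_
  simp only [Pi.mul_apply, id]
  field_simp [(phi_pos c).ne']
  ring

lemma g_strictMono : StrictMono g :=
  strictMono_of_deriv_pos fun c => by
    rw [(hasDerivAt_g c).deriv]
    exact div_pos (sub_pos.2 (mul_phi_lt_one_add_sq_mul_one_sub_Phi c)) (phi_pos c)

lemma hasDerivAt_Imap (lam c : ℝ) :
    HasDerivAt (Imap lam) ((1 - lam / 2) * phi c * (phi c - c * (1 - Phi c)) / (1 - Phi c) ^ 2) c :=
  (((hasDerivAt_phi c).const_mul _).div ((hasDerivAt_Phi c).const_sub 1)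
    (one_sub_Phi_pos c).ne').congr_deriv (by ring)

lemma Imap_strictMono {lam : ℝ} (h2 : lam < 2) : StrictMono (Imap lam) :=
  strictMono_of_deriv_pos fun c => by
    rw [(hasDerivAt_Imap lam c).deriv]
    have := sub_pos.2 (mul_one_sub_Phi_lt_phi c)
    have := phi_pos c
    have := one_sub_Phi_pos c
    have : 0 < 1 - lam / 2 := by linarith
    positivity

lemma Imap_pos {lam : ℝ} (h2 : lam < 2) (c : ℝ) : 0 < Imap lam c := by
  have := phi_pos c
  have := one_sub_Phi_pos c
  have : 0 < 1 - lam / 2 := by linarith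
  unfold Imap; positivity

lemma Imap_sub_self (lam c : ℝ) :
    Imap lam c - c = (1 - lam / 2 - g c) * (phi c / (1 - Phi c)) := by
  unfold Imap g
  field_simp [(phi_pos c).ne', (one_sub_Phi_pos c).ne']

section FixedPoint

variable {lam κ c : ℝ}

lemma lt_Imap_iff (hκ : g κ = 1 - lam / 2) : c < Imap lam c ↔ c < κ := by
  rw [← sub_pos, Imap_sub_self, ← hκ, mul_pos_iff_of_pos_right
    (div_pos (phi_pos c) (one_sub_Phi_pos c)), sub_pos, g_strictMono.lt_iff_lt]

lemma Imap_eq_self_iff (hκ : g κ = 1 - lam / 2) : Imap lam c = c ↔ c = κ := by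
  rw [← sub_eq_zero, Imap_sub_self, ← hκ, mul_eq_zero_iff_right
    (div_pos (phi_pos c) (one_sub_Phi_pos c)).ne', sub_eq_zero, g_strictMono.injective.eq_iff,
    eq_comm]

lemma le_Imap_iff (hκ : g κ = 1 - lam / 2) : c ≤ Imap lam c ↔ c ≤ κ := by
  rw [le_iff_lt_or_eq, lt_Imap_iff hκ, eq_comm, Imap_eq_self_iff hκ, ← le_iff_lt_or_eq]

lemma Imap_lt_iff (hκ : g κ = 1 - lam / 2) : Imap lam c < c ↔ κ < c := by
  simpa only [not_le] using (le_Imap_iff hκ).not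

lemma Imap_le_iff (hκ : g κ = 1 - lam / 2) : Imap lam c ≤ c ↔ κ ≤ c := by
  simpa only [not_lt] using (lt_Imap_iff hκ).not

end FixedPoint

theorem stmt16_general (lam κ : ℝ) (h2 : lam < 2)
    (hκ : g κ = 1 - lam / 2) :
    StrictMono (Imap lam) ∧ 0 < Imap lam 0 ∧
    (∀ c : ℝ, 0 ≤ c → (Imap lam c = c ↔ c = κ)) ∧
    (∀ c : ℝ, 0 < c → c < κ → c < Imap lam c ∧ Imap lam c < κ) ∧
    (∀ c : ℝ, κ < c → κ < Imap lam c ∧ Imap lam c < c) ∧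
    ∀ c₀ : ℝ, 0 ≤ c₀ →
      Filter.Tendsto (fun k => (Imap lam)^[k] c₀) Filter.atTop (nhds κ) ∧
      (c₀ ≤ κ → Monotone fun k => (Imap lam)^[k] c₀) ∧
      (κ ≤ c₀ → Antitone fun k => (Imap lam)^[k] c₀) := by
  have hmono := Imap_strictMono h2
  have hcont : Continuous (Imap lam) :=
    continuous_iff_continuousAt.2 fun c => (hasDerivAt_Imap lam c).continuousAt
  have hfix : Imap lam κ = κ := (Imap_eq_self_iff hκ).2 rfl
  have huniq : ∀ y, IsFixedPt (Imap lam) y → y = κ := fun y => (Imap_eq_self_iff hκ).1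
  refine ⟨hmono, Imap_pos h2 0, fun c _ => Imap_eq_self_iff hκ,
    fun c _ hc => ⟨(lt_Imap_iff hκ).2 hc, hfix ▸ hmono hc⟩,
    fun c hc => ⟨hfix ▸ hmono hc, (Imap_lt_iff hκ).2 hc⟩, fun c₀ _ => ⟨?_,
    fun hc => hmono.monotone.monotone_iterate_of_le_map ((le_Imap_iff hκ).2 hc),
    fun hc => hmono.monotone.antitone_iterate_of_map_le ((Imap_le_iff hκ).2 hc)⟩⟩
  rcases le_total c₀ κ with hc | hc
  · exact hmono.monotone.tendsto_iterate_of_le_map_of_le_fixedPt hcont hfix huniq hc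
      ((le_Imap_iff hκ).2 hc)
  · exact hmono.monotone.tendsto_iterate_of_map_le_of_fixedPt_le hcont hfix huniq hc
      ((Imap_le_iff hκ).2 hc)

/-- properties of the iteration map I and monotone convergence of its iterates
to the fixed point κ. -/
theorem stmt16 (lam κ : ℝ) (h0 : 0 < lam) (h2 : lam < 2) (hκpos : 0 < κ)
    (hκ : g κ = 1 - lam / 2) :
    StrictMono (Imap lam) ∧ 0 < Imap lam 0 ∧
    (∀ c : ℝ, 0 ≤ c → (Imap lam c = c ↔ c = κ)) ∧
    (∀ c : ℝ, 0 < c → c < κ → c < Imap lam c ∧ Imap lam c < κ) ∧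
    (∀ c : ℝ, κ < c → κ < Imap lam c ∧ Imap lam c < c) ∧
    ∀ c₀ : ℝ, 0 ≤ c₀ →
      Filter.Tendsto (fun k => (Imap lam)^[k] c₀) Filter.atTop (nhds κ) ∧
      (c₀ ≤ κ → Monotone fun k => (Imap lam)^[k] c₀) ∧
      (κ ≤ c₀ → Antitone fun k => (Imap lam)^[k] c₀) :=
  stmt16_general lam κ h2 hκ
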